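/- arXiv:1012.3833 — 3 statements merged into one kernel-verified Lean document; each statement's English description precedes it below -/
import Mathlib

section
/- Let p > 3 be a prime. Then \sum_{k=0}^{\lfloor p/3 \rfloor} (3k)!/(27^k k!^3) \equiv \left(\frac{p}{3}\right) \pmod{p}, where \left(\frac{p}{3}\right) is the Legendre symbol (equal to 1 if p \equiv 1 mod 3 and -1 if p \equiv 2 mod 3). -/
open Finset

/-- `a ≡ b (mod p^k)` as rationals: `a - b` is `p^k` times a `p`-integral rational. -/
def ratCongr (p k : ℕ) (a b : ℚ) : Prop :=
  ∃ c : ℚ, a - b = (p : ℚ) ^ k * c ∧ ¬ (p ∣ c.den)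

instance : Fact (Nat.Prime 3) := ⟨by norm_num⟩

/-!
Since `(3k)! / (27^k k!^3) = (1/3)_k (2/3)_k / k!^2`, choosing naturals `x ≡ -1/3` and
`y ≡ -2/3` modulo `p` turns the `k`-th term into `binom(x, k) binom(y, k)` modulo `p`.
They can be taken with `x + y = p - 1` and `min x y = ⌊p/3⌋`, so Vandermonde's identity sums
the terms to `binom(p - 1, ⌊p/3⌋) ≡ (-1)^⌊p/3⌋ = (p/3)`.
-/

open Nat

theorem Rat.not_dvd_den_add {p : ℕ} (hp : p.Prime) {x y : ℚ} (hx : ¬ p ∣ x.den)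
    (hy : ¬ p ∣ y.den) : ¬ p ∣ (x + y).den :=
  fun h => (hp.dvd_mul.mp (h.trans (Rat.add_den_dvd x y))).elim hx hy

namespace ratCongr

variable {p k : ℕ}

theorem add (hp : p.Prime) {a b c d : ℚ} (h₁ : ratCongr p k a b) (h₂ : ratCongr p k c d) :
    ratCongr p k (a + c) (b + d) := by
  obtain ⟨u, hu, hu'⟩ := h₁
  obtain ⟨v, hv, hv'⟩ := h₂
  exact ⟨u + v, by linear_combination hu + hv, Rat.not_dvd_den_add hp hu' hv'⟩

theorem trans (hp : p.Prime) {a b c : ℚ} (h₁ : ratCongr p k a b) (h₂ : ratCongr p k b c) :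
    ratCongr p k a c := by
  obtain ⟨u, hu, hu'⟩ := h₁
  obtain ⟨v, hv, hv'⟩ := h₂
  exact ⟨u + v, by linear_combination hu + hv, Rat.not_dvd_den_add hp hu' hv'⟩

theorem sum (hp : p.Prime) {ι : Type*} {s : Finset ι} {f g : ι → ℚ}
    (h : ∀ i ∈ s, ratCongr p k (f i) (g i)) :
    ratCongr p k (∑ i ∈ s, f i) (∑ i ∈ s, g i) := by
  classical
  induction s using Finset.induction_on with
  | empty => exact ⟨0, by simp, by simpa using hp.ne_one⟩
  | insert i s hi ih =>
    rw [sum_insert hi, sum_insert hi]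
    exact (h i (mem_insert_self i s)).add hp (ih fun j hj => h j (mem_insert_of_mem hj))

end ratCongr

theorem ratCongr_intCast_div {p : ℕ} {n e : ℤ} {d : ℕ} (hd : (d : ZMod p) ≠ 0)
    (h : (n : ZMod p) = e * d) : ratCongr p 1 (n / d) e := by
  obtain ⟨y, hy⟩ : (p : ℤ) ∣ n - e * d :=
    (ZMod.intCast_zmod_eq_zero_iff_dvd _ p).mp (by push_cast; rw [h]; ring)
  have hd0 : (d : ℚ) ≠ 0 := by rintro h0; simp_all
  refine ⟨y / d, ?_, fun hp => hd ?_⟩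
  · have hyq : (n : ℚ) - e * d = p * y := by exact_mod_cast hy
    field_simp
    linear_combination hyq
  · have hden : (((y : ℚ) / d).den : ℤ) ∣ d := by
      rw [← Int.cast_natCast d, ← Rat.divInt_eq_div]
      exact Rat.den_dvd y d
    exact (ZMod.natCast_eq_zero_iff _ _).mpr (Int.natCast_dvd_natCast.mp
      ((Int.natCast_dvd_natCast.mpr hp).trans hden))

theorem ratCongr_intCast {p : ℕ} [Fact (1 < p)] {n e : ℤ} (h : (n : ZMod p) = e) :
    ratCongr p 1 n e := by
  simpa using ratCongr_intCast_div (d := 1) (by simp) (by simpa using h)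

theorem cast_factorial_three_mul {R : Type*} [CommRing R] {x y : R} (hx : 3 * x + 1 = 0)
    (hy : 3 * y + 2 = 0) (k : ℕ) :
    ((3 * k)! : R) = 27 ^ k * (descPochhammer R k).eval x * (descPochhammer R k).eval y * k ! := by
  induction k with
  | zero => simp
  | succ k ih =>
    have key : ((3 * k + 1) * (3 * k + 2) : R) = 9 * (x - k) * (y - k) := by
      linear_combination (3 * (k : R) + 2) * hx + (3 * (k : R) - 3 * x) * hy
    rw [show 3 * (k + 1) = 3 * k + 1 + 1 + 1 by ring, factorial_succ, factorial_succ,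
      factorial_succ, factorial_succ, descPochhammer_succ_eval, descPochhammer_succ_eval]
    push_cast
    linear_combination (3 * (k : R) + 3) * (3 * k + 2) * (3 * k + 1) * ih +
      (3 * (k : R) + 3) * (27 ^ k * (descPochhammer R k).eval x * (descPochhammer R k).eval y *
        k !) * key

theorem ZMod.natCast_choose_pred_prime {p : ℕ} [hp : Fact p.Prime] {k : ℕ} (hk : k < p) :
    ((p - 1).choose k : ZMod p) = (-1) ^ k := by
  induction k with
  | zero => simp
  | succ k ih =>
    have hpascal : (p - 1).choose k + (p - 1).choose (k + 1) = p.choose (k + 1) := by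
      rw [← choose_succ_succ', Nat.sub_add_cancel hp.out.one_le]
    have hzero : (p.choose (k + 1) : ZMod p) = 0 :=
      (ZMod.natCast_eq_zero_iff _ _).mpr (hp.out.dvd_choose_self k.succ_ne_zero hk)
    have hsum := congrArg (Nat.cast : ℕ → ZMod p) hpascal
    push_cast at hsum
    rw [hzero, ih (by omega)] at hsum
    linear_combination hsum

theorem Nat.sum_range_choose_mul_choose (a b : ℕ) :
    ∑ k ∈ range (b + 1), a.choose k * b.choose k = (a + b).choose b := by
  rw [add_choose_eq, Finset.Nat.sum_antidiagonal_eq_sum_range_succ_mk]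
  refine sum_congr rfl fun k hk => ?_
  rw [choose_symm (mem_range_succ_iff.mp hk)]

theorem legendreSym_three_eq_neg_one_pow {p : ℕ} (hp : Odd p) (h3 : ¬ 3 ∣ p) :
    legendreSym 3 p = (-1) ^ (p / 3) := by
  have hp2 := Nat.odd_iff.mp hp
  rw [legendreSym.mod]
  rcases (by omega : p % 3 = 1 ∨ p % 3 = 2) with h | h
  · rw [show (p : ℤ) % (3 : ℕ) = 1 by push_cast; omega, (Nat.even_iff.mpr (by omega)).neg_one_pow]
    exact legendreSym.at_one 3
  · rw [show (p : ℤ) % (3 : ℕ) = 2 by push_cast; omega, (Nat.odd_iff.mpr (by omega)).neg_one_pow]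
    decide

theorem ratCongr_factorial_three_mul_div {p x y k : ℕ} [Fact p.Prime] (hx : p ∣ 3 * x + 1)
    (hy : p ∣ 3 * y + 2) (hk : k < p) :
    ratCongr p 1 (((3 * k)! : ℚ) / (27 ^ k * (k ! : ℚ) ^ 3)) (x.choose k * y.choose k : ℕ) := by
  have hx' : 3 * (x : ZMod p) + 1 = 0 := by exact_mod_cast (ZMod.natCast_eq_zero_iff _ _).mpr hx
  have hy' : 3 * (y : ZMod p) + 2 = 0 := by exact_mod_cast (ZMod.natCast_eq_zero_iff _ _).mpr hy
  have h3 : (3 : ZMod p) ≠ 0 := fun h => by simp [h] at hx'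
  have hfac : (k ! : ZMod p) ≠ 0 := by
    rw [Ne, ZMod.natCast_eq_zero_iff, Fact.out (p := p.Prime).dvd_factorial]
    omega
  have hd : ((27 ^ k * k ! ^ 3 : ℕ) : ZMod p) ≠ 0 := by
    push_cast
    rw [show (27 : ZMod p) = 3 ^ 3 by norm_num]
    exact mul_ne_zero (pow_ne_zero _ (pow_ne_zero _ h3)) (pow_ne_zero _ hfac)
  have h := ratCongr_intCast_div (n := (3 * k)!) (e := (x.choose k * y.choose k : ℕ)) hd (by
    push_cast
    rw [cast_factorial_three_mul hx' hy', descPochhammer_eval_eq_descFactorial,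
      descPochhammer_eval_eq_descFactorial, descFactorial_eq_factorial_mul_choose,
      descFactorial_eq_factorial_mul_choose]
    push_cast
    ring)
  simpa only [Int.cast_natCast, Int.cast_mul, Nat.cast_mul, Nat.cast_pow, Nat.cast_ofNat] using h

theorem stmt10 (p : ℕ) (hp : p.Prime) (hp3 : 3 < p) :
    ratCongr p 1
      (∑ k ∈ Finset.range (p / 3 + 1),
        ((3 * k).factorial : ℚ) / (27 ^ k * (k.factorial : ℚ) ^ 3))
      (legendreSym 3 p : ℚ) := by
  have := Fact.mk hp
  have h3 : ¬ 3 ∣ p := fun h => by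
    have := (Nat.prime_dvd_prime_iff_eq Nat.prime_three hp).mp h
    omega
  set m := p / 3 with hm
  obtain ⟨x, y, hx, hy, hxy⟩ : ∃ x y, p ∣ 3 * x + 1 ∧ p ∣ 3 * y + 2 ∧
      ∑ k ∈ range (m + 1), x.choose k * y.choose k = (p - 1).choose m := by
    rcases (by omega : p = 3 * m + 1 ∨ p = 3 * m + 2) with h | h
    · refine ⟨m, 2 * m, ⟨1, by omega⟩, ⟨2, by omega⟩, ?_⟩
      simp_rw [mul_comm (m.choose _)]
      rw [Nat.sum_range_choose_mul_choose, show 2 * m + m = p - 1 by omega]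
    · refine ⟨2 * m + 1, m, ⟨2, by omega⟩, ⟨1, by omega⟩, ?_⟩
      rw [Nat.sum_range_choose_mul_choose, show 2 * m + 1 + m = p - 1 by omega]
  have hsum := ratCongr.sum (s := range (m + 1)) hp fun k hk =>
    ratCongr_factorial_three_mul_div (k := k) hx hy (by rw [mem_range] at hk; omega)
  rw [← Nat.cast_sum, hxy] at hsum
  rw [legendreSym_three_eq_neg_one_pow (hp.odd_of_ne_two (by omega)) h3]
  have hchoose : (((p - 1).choose m : ℤ) : ZMod p) = ((-1) ^ m : ℤ) := by
    push_cast
    exact ZMod.natCast_choose_pred_prime (by omega)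
  exact hsum.trans hp (by exact_mod_cast ratCongr_intCast hchoose)
end

section
/- Let p be an odd prime and x a rational p-integer with x not divisible by p and x+1 not divisible by p. Then P_{(p-1)/2}(x) \equiv \left(\frac{2(x+1)}{p}\right) P_{(p-1)/2}\left(\frac{3-x}{1+x}\right) \pmod{p}, where (\cdot/p) is the Legendre symbol and P_n is the Legendre polynomial. -/
/-!
With `n = (p - 1) / 2` and the binary form `F(a, b) = ∑ₖ C(n,k)² aᵏ bⁿ⁻ᵏ` (`legendreForm n a b`),
one has `2ⁿ Pₙ(x) = F(x - 1, x + 1)`. Vandermonde's identity gives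
`F(a, a + c) = ∑ₘ C(n,m) C(n+m,m) aᵐ cⁿ⁻ᵐ`, and `C(n+m, m) ≡ (-1)ᵐ C(n, m) (mod p)` because
`2n + 1 = p`; hence `F(a, a + c) ≡ F(-a, c)`. So `2ⁿ Pₙ(x) ≡ F(1 - x, 2)`, while homogeneity of
`F` turns `2ⁿ (2(1 + x))ⁿ Pₙ((3 - x)/(1 + x))` into `2ⁿ F(2(1 - x), 4) = 2²ⁿ F(1 - x, 2)`, which is
`≡ F(1 - x, 2)` by Fermat. Euler's criterion identifies `(2(1 + x))ⁿ` with the Legendre symbol.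
All congruences are computed in `ZMod p` through the reduction map of the `p`-integral rationals.
-/

open Finset Polynomial

/-- The Legendre polynomial `P n`, defined via Rodrigues' formula. -/
noncomputable def legendre (n : ℕ) : Polynomial ℚ :=
  ((2 ^ n * n.factorial : ℚ)⁻¹) • ((fun q => Polynomial.derivative q)^[n] ((X ^ 2 - 1) ^ n))

/-- The Legendre symbol of a `p`-integral rational `x` modulo `p`
(for `x = m/n` it is `(mn/p)`, the symbol of the residue of `x` mod `p`). -/
def ratLegendreSym (p : ℕ) [Fact p.Prime] (x : ℚ) : ℤ :=
  legendreSym p (x.num * x.den)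

open scoped Nat

section LegendreForm

variable {R S : Type*} [CommRing R] [CommRing S]

def legendreForm (n : ℕ) (a b : R) : R :=
  ∑ k ∈ range (n + 1), (n.choose k : R) ^ 2 * a ^ k * b ^ (n - k)

lemma map_legendreForm (f : R →+* S) (n : ℕ) (a b : R) :
    f (legendreForm n a b) = legendreForm n (f a) (f b) := by
  simp [legendreForm]

lemma Subring.coe_legendreForm (T : Subring R) (n : ℕ) (a b : T) :
    ((legendreForm n a b : T) : R) = legendreForm n (a : R) b :=
  map_legendreForm T.subtype n a b

lemma Subring.coe_ofNat (T : Subring R) (m : ℕ) [m.AtLeastTwo] :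
    ((OfNat.ofNat m : T) : R) = OfNat.ofNat m :=
  map_ofNat T.subtype m

lemma legendreForm_mul_mul (n : ℕ) (t a b : R) :
    legendreForm n (t * a) (t * b) = t ^ n * legendreForm n a b := by
  rw [legendreForm, legendreForm, mul_sum]
  refine sum_congr rfl fun k hk => ?_
  have hk : k ≤ n := Nat.lt_succ_iff.1 (mem_range.1 hk)
  calc (n.choose k : R) ^ 2 * (t * a) ^ k * (t * b) ^ (n - k)
      = (t ^ k * t ^ (n - k)) * ((n.choose k : R) ^ 2 * a ^ k * b ^ (n - k)) := by ring
    _ = t ^ n * ((n.choose k : R) ^ 2 * a ^ k * b ^ (n - k)) := by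
      rw [← pow_add, Nat.add_sub_cancel' hk]

lemma sum_choose_sq_mul_choose (n m : ℕ) :
    ∑ k ∈ range (m + 1), n.choose k ^ 2 * (n - k).choose (m - k) =
      n.choose m * (n + m).choose m := by
  have hk : ∀ k ∈ range (m + 1),
      n.choose k ^ 2 * (n - k).choose (m - k) = n.choose m * (m.choose k * n.choose k) := by
    intro k hk
    rw [sq, mul_assoc, ← Nat.choose_mul (k := m) (Nat.lt_succ_iff.1 (mem_range.1 hk))]
    ring
  rw [sum_congr rfl hk, ← mul_sum, Nat.add_choose_eq, Nat.sum_antidiagonal_eq_sum_range_succ_mk]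
  congr 1
  refine sum_congr rfl fun k hk => ?_
  rw [Nat.choose_symm (Nat.lt_succ_iff.1 (mem_range.1 hk)), mul_comm]

lemma legendreForm_add (n : ℕ) (a c : R) :
    legendreForm n a (a + c) =
      ∑ m ∈ range (n + 1), ((n.choose m * (n + m).choose m : ℕ) : R) * a ^ m * c ^ (n - m) := by
  have expand : ∀ k ∈ range (n + 1), (n.choose k : R) ^ 2 * a ^ k * (a + c) ^ (n - k) =
      ∑ j ∈ range (n + 1 - k),
        ((n.choose k ^ 2 * (n - k).choose j : ℕ) : R) * a ^ (k + j) * c ^ (n - (k + j)) := by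
    intro k hk
    have hk : k ≤ n := Nat.lt_succ_iff.1 (mem_range.1 hk)
    rw [add_pow, mul_sum, show n - k + 1 = n + 1 - k by omega]
    refine sum_congr rfl fun j _ => ?_
    rw [pow_add, Nat.sub_sub]
    push_cast
    ring
  rw [legendreForm, sum_congr rfl expand, ← sum_range_diag_flip]
  refine sum_congr rfl fun m _ => ?_
  rw [sum_congr rfl fun k hk => by rw [Nat.add_sub_cancel' (Nat.lt_succ_iff.1 (mem_range.1 hk))],
    ← sum_mul, ← sum_mul, ← Nat.cast_sum, sum_choose_sq_mul_choose]

lemma iterate_derivative_X_sq_sub_one_pow (n : ℕ) :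
    derivative^[n] ((X ^ 2 - 1 : R[X]) ^ n) = (n ! : R[X]) * legendreForm n (X - 1) (X + 1) := by
  have hfac : (X ^ 2 - 1 : R[X]) ^ n = (X - C 1) ^ n * (X + C 1) ^ n := by
    rw [← mul_pow, C_1]; ring
  rw [hfac, iterate_derivative_mul, legendreForm, mul_sum]
  refine sum_congr rfl fun k hk => ?_
  have hk : k ≤ n := Nat.lt_succ_iff.1 (mem_range.1 hk)
  have hcoeff : (n.choose k * (n.descFactorial (n - k) * n.descFactorial k) : R[X]) =
      n ! * n.choose k ^ 2 := by
    rw [Nat.descFactorial_eq_factorial_mul_choose, Nat.descFactorial_eq_factorial_mul_choose,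
      Nat.choose_symm hk, ← Nat.choose_mul_factorial_mul_factorial hk]
    push_cast
    ring
  rw [iterate_derivative_X_sub_pow, iterate_derivative_X_add_pow, Nat.sub_sub_self hk, C_1]
  simp only [nsmul_eq_mul]
  linear_combination ((X - 1) ^ k * (X + 1) ^ (n - k) : R[X]) * hcoeff

end LegendreForm

lemma eval_legendre (n : ℕ) (x : ℚ) :
    (legendre n).eval x = (2 ^ n)⁻¹ * legendreForm n (x - 1) (x + 1) := by
  have h := congrArg (eval x) (iterate_derivative_X_sq_sub_one_pow (R := ℚ) n)
  rw [eval_mul, eval_natCast, ← coe_evalRingHom, map_legendreForm] at h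
  simp only [coe_evalRingHom, eval_sub, eval_add, eval_X, eval_one] at h
  rw [legendre, eval_smul, smul_eq_mul, show (fun q : ℚ[X] => derivative q) = ⇑derivative from rfl,
    h]
  field_simp

section Reduction

variable {p : ℕ} [Fact p.Prime]

lemma choose_add_eq_neg_one_pow_mul_choose {n m : ℕ} (hn : 2 * n + 1 = p) (hm : m ≤ n) :
    ((n + m).choose m : ZMod p) = (-1) ^ m * n.choose m := by
  have hfac : (m ! : ZMod p) ≠ 0 := by
    rw [Ne, ZMod.natCast_eq_zero_iff, Nat.Prime.dvd_factorial Fact.out]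
    omega
  have hterm : ∀ i ∈ range m, ((n + 1 + i : ℕ) : ZMod p) = -1 * ((n - i : ℕ) : ZMod p) := by
    intro i hi
    have hsum : n + 1 + i + (n - i) = p := by have := mem_range.1 hi; omega
    rw [neg_one_mul, eq_neg_iff_add_eq_zero, ← Nat.cast_add, hsum, ZMod.natCast_self]
  refine mul_left_cancel₀ hfac ?_
  calc (m ! : ZMod p) * (n + m).choose m = ((n + m).descFactorial m : ℕ) := by
        rw [Nat.descFactorial_eq_factorial_mul_choose]; push_cast; ring
    _ = ∏ i ∈ range m, ((n + 1 + i : ℕ) : ZMod p) := by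
        rw [Nat.add_descFactorial_eq_ascFactorial, Nat.ascFactorial_eq_prod_range, Nat.cast_prod]
    _ = (-1) ^ m * ∏ i ∈ range m, ((n - i : ℕ) : ZMod p) := by
        rw [prod_congr rfl hterm, prod_mul_distrib, prod_const, card_range]
    _ = (m ! : ZMod p) * ((-1) ^ m * n.choose m) := by
        rw [← Nat.cast_prod, ← Nat.descFactorial_eq_prod_range,
          Nat.descFactorial_eq_factorial_mul_choose]
        push_cast; ring

lemma legendreForm_add_eq_neg {n : ℕ} (hn : 2 * n + 1 = p) (a c : ZMod p) :
    legendreForm n a (a + c) = legendreForm n (-a) c := by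
  rw [legendreForm_add, legendreForm]
  refine sum_congr rfl fun m hm => ?_
  rw [Nat.cast_mul, choose_add_eq_neg_one_pow_mul_choose hn (Nat.lt_succ_iff.1 (mem_range.1 hm)),
    neg_pow]
  ring

lemma legendreForm_moebius {n : ℕ} (hn : 2 * n + 1 = p) {u : ZMod p} (hu : 1 + u ≠ 0) :
    legendreForm n (u - 1) (u + 1) =
      (2 * (1 + u)) ^ n * legendreForm n ((3 - u) / (1 + u) - 1) ((3 - u) / (1 + u) + 1) := by
  have h2 : (2 : ZMod p) ≠ 0 := Ring.two_ne_zero (by rw [ZMod.ringChar_zmod_n]; omega)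
  have hfermat : (2 : ZMod p) ^ (2 * n) = 1 := by
    rw [show 2 * n = p - 1 by omega]
    exact ZMod.pow_card_sub_one_eq_one h2
  have hsub : (1 + u) * ((3 - u) / (1 + u) - 1) = 2 * (1 - u) := by field_simp; ring
  have hadd : (1 + u) * ((3 - u) / (1 + u) + 1) = 2 * 2 := by field_simp; ring
  calc legendreForm n (u - 1) (u + 1) = legendreForm n (u - 1) (u - 1 + 2) := by ring_nf
    _ = legendreForm n (1 - u) 2 := by rw [legendreForm_add_eq_neg hn, neg_sub]
    _ = 2 ^ (2 * n) * legendreForm n (1 - u) 2 := by rw [hfermat, one_mul]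
    _ = 2 ^ n * legendreForm n (2 * (1 - u)) (2 * 2) := by rw [legendreForm_mul_mul]; ring
    _ = _ := by rw [← hsub, ← hadd, legendreForm_mul_mul, mul_pow, mul_assoc]

end Reduction

section PadicIntegers

variable {p : ℕ} [Fact p.Prime]

lemma mem_padicValuation_integer_iff {q : ℚ} :
    q ∈ (Rat.padicValuation p).integer ↔ ¬ p ∣ q.den :=
  (Valuation.mem_integer_iff _ _).trans Rat.padicValuation_le_one_iff

lemma inv_mem_padicValuation_integer {q : ℚ} (hq : ¬ (p : ℤ) ∣ q.num) :
    q⁻¹ ∈ (Rat.padicValuation p).integer := by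
  have hq0 : q ≠ 0 := by rintro rfl; exact hq (dvd_zero _)
  rw [mem_padicValuation_integer_iff, Rat.den_inv_of_ne_zero hq0]
  exact fun h => hq (Int.natCast_dvd.2 h)

lemma natCast_den_ne_zero {q : ℚ} (hq : q ∈ (Rat.padicValuation p).integer) :
    (q.den : ZMod p) ≠ 0 := by
  rw [Ne, ZMod.natCast_eq_zero_iff]
  exact mem_padicValuation_integer_iff.1 hq

variable (p) in
def padicIntegerToZMod : (Rat.padicValuation p).integer →+* ZMod p where
  toFun q := ((q : ℚ) : ZMod p)
  map_one' := Rat.cast_one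
  map_mul' a b := Rat.cast_mul_of_ne_zero (natCast_den_ne_zero a.2) (natCast_den_ne_zero b.2)
  map_zero' := Rat.cast_zero
  map_add' a b := Rat.cast_add_of_ne_zero (natCast_den_ne_zero a.2) (natCast_den_ne_zero b.2)

lemma div_mem_of_padicIntegerToZMod_eq_zero {a : (Rat.padicValuation p).integer}
    (ha : padicIntegerToZMod p a = 0) : (a : ℚ) / p ∈ (Rat.padicValuation p).integer := by
  set q : ℚ := (a : ℚ)
  have hnum : ((q.num : ℤ) : ZMod p) = 0 := by
    have h : ((q : ℚ) : ZMod p) = 0 := ha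
    rwa [Rat.cast_def, div_eq_zero_iff, or_iff_left (natCast_den_ne_zero a.2)] at h
  obtain ⟨m, hm⟩ := (ZMod.intCast_zmod_eq_zero_iff_dvd _ _).1 hnum
  have hp : (p : ℚ) ≠ 0 := Nat.cast_ne_zero.2 (Fact.out : p.Prime).ne_zero
  have hq : q / p = m * (q.den : ℚ)⁻¹ := by
    conv_lhs => rw [← Rat.num_div_den q, hm]
    push_cast
    field_simp
  rw [hq]
  refine mul_mem (intCast_mem _ m) (inv_mem_padicValuation_integer ?_)
  rw [Rat.num_natCast, Int.natCast_dvd_natCast]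
  exact mem_padicValuation_integer_iff.1 a.2

lemma ratCongr_of_padicIntegerToZMod_eq {a b : (Rat.padicValuation p).integer}
    (h : padicIntegerToZMod p a = padicIntegerToZMod p b) : ratCongr p 1 a b := by
  have hp : (p : ℚ) ≠ 0 := Nat.cast_ne_zero.2 (Fact.out : p.Prime).ne_zero
  refine ⟨((a - b : (Rat.padicValuation p).integer) : ℚ) / p, ?_,
    mem_padicValuation_integer_iff.1 (div_mem_of_padicIntegerToZMod_eq_zero ?_)⟩
  · push_cast
    field_simp
  · rw [map_sub, h, sub_self]

lemma intCast_ratLegendreSym (hp : p ≠ 2) (a : (Rat.padicValuation p).integer) :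
    ((ratLegendreSym p a : ℤ) : ZMod p) = padicIntegerToZMod p a ^ (p / 2) := by
  set q : ℚ := (a : ℚ)
  have hd := natCast_den_ne_zero a.2
  have hnum : ((q.num : ℤ) : ZMod p) = padicIntegerToZMod p a * q.den := by
    rw [← div_mul_cancel₀ ((q.num : ℤ) : ZMod p) hd, ← Rat.cast_def]
    rfl
  have hodd := Nat.odd_iff.1 ((Fact.out : p.Prime).odd_of_ne_two hp)
  rw [ratLegendreSym, legendreSym.eq_pow]
  push_cast
  rw [hnum, mul_assoc, ← sq, mul_pow, ← pow_mul, show 2 * (p / 2) = p - 1 by omega,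
    ZMod.pow_card_sub_one_eq_one hd, mul_one]

lemma legendre_eval_mem (hp : p ≠ 2) (n : ℕ) (x : (Rat.padicValuation p).integer) :
    (legendre n).eval (x : ℚ) ∈ (Rat.padicValuation p).integer := by
  have h2 : (2 : ℚ)⁻¹ ∈ (Rat.padicValuation p).integer := by
    refine inv_mem_padicValuation_integer fun h => hp ?_
    rw [Rat.num_ofNat] at h
    exact (Nat.prime_dvd_prime_iff_eq Fact.out Nat.prime_two).1 (by exact_mod_cast h)
  rw [eval_legendre, ← inv_pow]
  refine mul_mem (pow_mem h2 n) ?_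
  have h := (legendreForm n (x - 1) (x + 1)).2
  rw [Subring.coe_legendreForm] at h
  push_cast at h
  exact h

lemma two_pow_mul_padicIntegerToZMod_legendre_eval (hp : p ≠ 2) (n : ℕ)
    (x : (Rat.padicValuation p).integer) :
    2 ^ n * padicIntegerToZMod p ⟨(legendre n).eval (x : ℚ), legendre_eval_mem hp n x⟩ =
      legendreForm n (padicIntegerToZMod p x - 1) (padicIntegerToZMod p x + 1) := by
  have h : 2 ^ n * ⟨(legendre n).eval (x : ℚ), legendre_eval_mem hp n x⟩ =
      legendreForm n (x - 1) (x + 1) := by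
    apply Subtype.ext
    rw [Subring.coe_legendreForm]
    push_cast
    rw [Subring.coe_ofNat, eval_legendre]
    field_simp
  rw [← map_ofNat (padicIntegerToZMod p) 2, ← map_pow, ← map_mul, h, map_legendreForm, map_sub,
    map_add, map_one]

end PadicIntegers

theorem stmt13_general (p : ℕ) [Fact p.Prime] (hodd : p ≠ 2) (x : ℚ) (hden : ¬ (p ∣ x.den))
    (hx1 : ¬ ((p : ℤ) ∣ (x + 1).num)) :
    ratCongr p 1 ((legendre ((p - 1) / 2)).eval x)
      ((ratLegendreSym p (2 * (x + 1)) : ℚ) *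
        (legendre ((p - 1) / 2)).eval ((3 - x) / (1 + x))) := by
  set n := (p - 1) / 2
  have hn : 2 * n + 1 = p := by
    have := Nat.odd_iff.1 ((Fact.out : p.Prime).odd_of_ne_two hodd)
    omega
  set r := padicIntegerToZMod p
  let X : (Rat.padicValuation p).integer := ⟨x, mem_padicValuation_integer_iff.2 hden⟩
  let W : (Rat.padicValuation p).integer :=
    ⟨(1 + x)⁻¹, inv_mem_padicValuation_integer (by rwa [add_comm])⟩
  let Y : (Rat.padicValuation p).integer := (3 - X) * W
  have hx0 : 1 + x ≠ 0 := fun h => hx1 (by rw [add_comm, h, Rat.num_zero]; exact dvd_zero _)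
  have hW : r (1 + X) * r W = 1 := by
    rw [← map_mul, ← map_one r]
    exact congrArg r (Subtype.ext (mul_inv_cancel₀ hx0))
  rw [map_add, map_one] at hW
  have hY : r Y = (3 - r X) / (1 + r X) := by
    rw [map_mul, map_sub, map_ofNat, eq_inv_of_mul_eq_one_right hW, div_eq_mul_inv]
  have hsym : ((ratLegendreSym p (2 * (x + 1)) : ℤ) : ZMod p) = (2 * (1 + r X)) ^ n := by
    rw [show 2 * (x + 1) = ((2 * (X + 1) : (Rat.padicValuation p).integer) : ℚ) from rfl,
      intCast_ratLegendreSym hodd, show p / 2 = n by omega, map_mul, map_add, map_one, map_ofNat,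
      add_comm (r X)]
  refine ratCongr_of_padicIntegerToZMod_eq (a := ⟨_, legendre_eval_mem hodd n X⟩)
    (b := ((ratLegendreSym p (2 * (x + 1)) : ℤ) : (Rat.padicValuation p).integer) *
      ⟨_, legendre_eval_mem hodd n Y⟩) ?_
  have h2 : (2 : ZMod p) ≠ 0 := Ring.two_ne_zero (by rwa [ZMod.ringChar_zmod_n])
  refine mul_left_cancel₀ (pow_ne_zero n h2) ?_
  rw [two_pow_mul_padicIntegerToZMod_legendre_eval hodd, map_mul, map_intCast, hsym,
    mul_left_comm, two_pow_mul_padicIntegerToZMod_legendre_eval hodd, hY]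
  exact legendreForm_moebius hn (left_ne_zero_of_mul_eq_one hW)

theorem stmt13 (p : ℕ) [Fact p.Prime] (hodd : p ≠ 2) (x : ℚ) (hden : ¬ (p ∣ x.den))
    (hx0 : ¬ ((p : ℤ) ∣ x.num)) (hx1 : ¬ ((p : ℤ) ∣ (x + 1).num)) :
    ratCongr p 1 ((legendre ((p - 1) / 2)).eval x)
      ((ratLegendreSym p (2 * (x + 1)) : ℚ) *
        (legendre ((p - 1) / 2)).eval ((3 - x) / (1 + x))) :=
  stmt13_general p hodd x hden hx1
end

section
/- Let p be a prime with p \equiv 3 (mod 4). Then p divides the numerator of P_{(p-1)/2}(3), where P_n is the n-th Legendre polynomial. -/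
/-!
Expanding `(x² - 1)ⁿ = (x - 1)ⁿ (x - 1 + 2)ⁿ` in Rodrigues' formula gives
`Pₙ(x) = ∑ C(n,k) C(n+k,k) ((x - 1) / 2)ᵏ`, so `Pₙ(3) = ∑ C(n,k) C(n+k,k)` is an integer.
For `p = 2n + 1` one has `C(n+k,k) ≡ (-1)ᵏ C(n,k) (mod p)`, because `n + 1 + i ≡ -(n - i)`.
Hence `Pₙ(3) ≡ ∑ (-1)ᵏ C(n,k)² (mod p)`, and for odd `n` (i.e. `p ≡ 3 mod 4`) the terms
`k` and `n - k` of this sum cancel.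
-/

open Polynomial

open Finset

theorem legendre_eval (n : ℕ) (x : ℚ) :
    (legendre n).eval x =
      ∑ k ∈ range (n + 1), (n.choose k * (n + k).choose k : ℚ) * ((x - 1) / 2) ^ k := by
  have hexpand : ((X : ℚ[X]) ^ 2 - 1) ^ n =
      ∑ k ∈ range (n + 1), C (2 ^ (n - k) * n.choose k : ℚ) * (X - C 1) ^ (n + k) := by
    rw [show (X : ℚ[X]) ^ 2 - 1 = (X - C 1) * ((X - C 1) + 2) by rw [C_1]; ring,
      mul_pow, add_pow, mul_sum]
    refine sum_congr rfl fun k _ => ?_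
    simp only [map_mul, map_pow, map_natCast, map_ofNat]
    ring
  rw [legendre, hexpand, iterate_derivative_sum, eval_smul, eval_finsetSum, smul_eq_mul, mul_sum]
  refine sum_congr rfl fun k hk => ?_
  have hkn : k ≤ n := Nat.lt_succ_iff.1 (mem_range.1 hk)
  rw [iterate_derivative_C_mul, iterate_derivative_X_sub_pow, Nat.add_sub_cancel_left,
    Nat.descFactorial_eq_factorial_mul_choose, Nat.choose_symm_add]
  simp only [eval_mul, eval_C, eval_pow, eval_sub, eval_X, eval_natCast, nsmul_eq_mul, div_pow,
    Nat.cast_mul]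
  have h2 : (2 : ℚ) ^ (n - k) * 2 ^ k = 2 ^ n := by rw [← pow_add, Nat.sub_add_cancel hkn]
  rw [← h2]
  field_simp

theorem legendre_eval_three (n : ℕ) :
    (legendre n).eval 3 =
      ((∑ k ∈ range (n + 1), n.choose k * (n + k).choose k : ℕ) : ℚ) := by
  norm_num [legendre_eval]

theorem ascFactorial_succ_cast_eq_neg_one_pow_mul {R : Type*} [CommRing R] {n k : ℕ}
    (h : ((2 * n + 1 : ℕ) : R) = 0) (hk : k ≤ n) :
    ((n + 1).ascFactorial k : R) = (-1) ^ k * n.descFactorial k := by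
  induction k with
  | zero => simp
  | succ k ih =>
    have hneg : ((n + 1 + k : ℕ) : R) = -((n - k : ℕ) : R) := by
      rw [eq_neg_iff_add_eq_zero, ← Nat.cast_add, ← h]
      congr 1
      omega
    rw [Nat.ascFactorial_succ, Nat.descFactorial_succ, Nat.cast_mul, Nat.cast_mul,
      ih (by omega), hneg]
    ring

theorem choose_add_cast_eq_neg_one_pow_mul {p n k : ℕ} [Fact p.Prime] (hp : p = 2 * n + 1)
    (hk : k ≤ n) : ((n + k).choose k : ZMod p) = (-1) ^ k * n.choose k := by
  have hfac : (k.factorial : ZMod p) ≠ 0 := by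
    rw [Ne, ZMod.natCast_eq_zero_iff, Nat.Prime.dvd_factorial Fact.out]
    omega
  have h := ascFactorial_succ_cast_eq_neg_one_pow_mul (R := ZMod p) (hp ▸ ZMod.natCast_self p) hk
  rw [Nat.ascFactorial_eq_factorial_mul_choose, Nat.descFactorial_eq_factorial_mul_choose,
    Nat.cast_mul, Nat.cast_mul] at h
  refine mul_left_cancel₀ hfac ?_
  rw [h]
  ring

theorem sum_neg_one_pow_mul_choose_sq_of_odd {R : Type*} [Ring R] {n : ℕ} (hn : Odd n) :
    ∑ k ∈ range (n + 1), (-1 : R) ^ k * n.choose k ^ 2 = 0 := by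
  refine sum_involution (fun k _ => n - k) (fun k hk => ?_) (fun k _ _ => ?_)
    (fun k _ => mem_range.2 (by omega)) (fun k hk => by have := mem_range.1 hk; omega)
  · have hkn : k ≤ n := Nat.lt_succ_iff.1 (mem_range.1 hk)
    have hsign : (-1 : R) ^ (n - k) = -(-1) ^ k := by
      rcases Nat.even_or_odd k with hk' | hk'
      · rw [hk'.neg_one_pow, ((Nat.odd_sub hkn).2 (by simp [hn, hk'])).neg_one_pow]
      · have hnk : Even (n - k) := (Nat.even_sub hkn).2 <|
          iff_of_false (Nat.not_even_iff_odd.2 hn) (Nat.not_even_iff_odd.2 hk')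
        rw [hk'.neg_one_pow, hnk.neg_one_pow, neg_neg]
    rw [Nat.choose_symm hkn, hsign]
    noncomm_ring
  · obtain ⟨m, rfl⟩ := hn
    omega

theorem stmt14 (p : ℕ) (hp : p.Prime) (hp4 : p % 4 = 3) :
    (p : ℤ) ∣ ((legendre ((p - 1) / 2)).eval (3 : ℚ)).num := by
  have : Fact p.Prime := ⟨hp⟩
  set n := (p - 1) / 2
  have hpn : p = 2 * n + 1 := by omega
  rw [legendre_eval_three, Rat.num_natCast, Int.natCast_dvd_natCast, ← ZMod.natCast_eq_zero_iff]
  push_cast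
  calc ∑ k ∈ range (n + 1), (n.choose k * (n + k).choose k : ZMod p)
      = ∑ k ∈ range (n + 1), (-1) ^ k * (n.choose k : ZMod p) ^ 2 :=
        sum_congr rfl fun k hk => by
          rw [choose_add_cast_eq_neg_one_pow_mul hpn (Nat.lt_succ_iff.1 (mem_range.1 hk))]
          ring
    _ = 0 := sum_neg_one_pow_mul_choose_sq_of_odd (Nat.odd_iff.2 (by omega))
end
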